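/- arXiv:2602.20109 — 6 statements merged into one kernel-verified Lean document; each statement's English description precedes it below -/
import Mathlib

section
/- Let p ≥ 5 be a prime and let X₁, X₂ ∈ 𝔽_p[x₄,x₆] be homogeneous (for the weighted grading) of weighted degrees d₁ and d₂ with d₁ ≡ −1 (mod p) and d₂ ≡ 1 (mod p). If R(X₂ − x₂·X₁) = 0 in 𝔽_p[x₂,x₄,x₆], then ∂X₁ = X₂ and ∂X₂ = −x₄·X₁. -/
open MvPolynomial

noncomputable section

/-- `sig k n = ∑_{d ∣ n} d^k`. -/
def sig (k n : ℕ) : ℕ := ∑ d ∈ n.divisors, d ^ k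

/-- The normalized Eisenstein series `E_ν` as a formal power series in `ℚ[[q]]`
(valid for even `ν ≥ 2`): `E_ν = 1 − (2ν/B_ν) ∑_{n ≥ 1} σ_{ν−1}(n) qⁿ`. -/
def Eis (ν : ℕ) : PowerSeries ℚ :=
  PowerSeries.mk fun n => if n = 0 then 1 else -(2 * (ν : ℚ) / bernoulli ν) * (sig (ν - 1) n : ℚ)

/-- Reduction modulo `p` of a rational number (the correct reduction whenever the
denominator is prime to `p`). -/
def rred (p : ℕ) [Fact p.Prime] (r : ℚ) : ZMod p :=
  (r.num : ZMod p) * (r.den : ZMod p)⁻¹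

/-- The Ramanujan vector field `R` on `S[x₂,x₄,x₆]` (variables `0 ↦ x₂`, `1 ↦ x₄`, `2 ↦ x₆`),
where `u` is the inverse of `6` in `S`:
`R = ((x₂² − x₄)/12)∂/∂x₂ + ((x₂x₄ − x₆)/3)∂/∂x₄ + ((x₂x₆ − x₄²)/2)∂/∂x₆`. -/
def Rvf {S : Type*} [CommRing S] (u : S) (f : MvPolynomial (Fin 3) S) :
    MvPolynomial (Fin 3) S :=
  C (3 * u * u) * (X 0 ^ 2 - X 1) * pderiv 0 f
    + C (2 * u) * (X 0 * X 1 - X 2) * pderiv 1 f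
    + C (3 * u) * (X 0 * X 2 - X 1 ^ 2) * pderiv 2 f

/-- The vector field `F = −12 ∂/∂x₂`. -/
def Fvf {S : Type*} [CommRing S] (f : MvPolynomial (Fin 3) S) : MvPolynomial (Fin 3) S :=
  (-12 : MvPolynomial (Fin 3) S) * pderiv 0 f

/-- The vector field `H = 2x₂ ∂/∂x₂ + 4x₄ ∂/∂x₄ + 6x₆ ∂/∂x₆`. -/
def Hvf {S : Type*} [CommRing S] (f : MvPolynomial (Fin 3) S) : MvPolynomial (Fin 3) S :=
  C 2 * X 0 * pderiv 0 f + C 4 * X 1 * pderiv 1 f + C 6 * X 2 * pderiv 2 f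

/-- The Ramanujan–Serre vector field `∂ = −4x₆ ∂/∂x₄ − 6x₄² ∂/∂x₆` on `S[x₄,x₆]`
(variables `0 ↦ x₄`, `1 ↦ x₆`). -/
def serreD {S : Type*} [CommRing S] (f : MvPolynomial (Fin 2) S) : MvPolynomial (Fin 2) S :=
  -(C 4 * X 1 * pderiv 0 f) - C 6 * X 0 ^ 2 * pderiv 1 f

/-- View a polynomial of `𝔽_p[x₄,x₆]` inside `k[x₂,x₄,x₆]`, for `k` a field of
characteristic `p` (via the inclusion `𝔽_p ⊆ k` and `x₄ ↦ x₄`, `x₆ ↦ x₆`). -/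
def lift3 (p : ℕ) (k : Type*) [Field k] [CharP k p] (Q : MvPolynomial (Fin 2) (ZMod p)) :
    MvPolynomial (Fin 3) k :=
  rename (![1, 2] : Fin 2 → Fin 3) (MvPolynomial.map (ZMod.castHom (dvd_refl p) k) Q)

/-- View a polynomial of `𝔽_p[x₄,x₆]` inside `k[x₄,x₆]`, for `k` a field of
characteristic `p`. -/
def lift2 (p : ℕ) (k : Type*) [Field k] [CharP k p] (Q : MvPolynomial (Fin 2) (ZMod p)) :
    MvPolynomial (Fin 2) k :=
  MvPolynomial.map (ZMod.castHom (dvd_refl p) k) Q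

/-! Since `6` is invertible, `12 R` has integral coefficients. Viewed as a polynomial in `x₂` over
`𝔽_p[x₄,x₆]`, `12 R(X₂ − x₂X₁)` has constant coefficient `∂X₂ + x₄X₁` and linear coefficient
`E X₂ − ∂X₁`, where `E = 4x₄ ∂/∂x₄ + 6x₆ ∂/∂x₆` is the weighted Euler operator. Both vanish, and
Euler's identity `E X₂ = d₂ X₂ = X₂` gives the result. -/

section

variable {S : Type*} [CommRing S] {n : ℕ}

lemma MvPolynomial.pderiv_zero_rename_succ (f : MvPolynomial (Fin n) S) :
    pderiv 0 (rename Fin.succ f) = 0 := by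
  refine pderiv_eq_zero_of_notMem_vars fun h0 => ?_
  obtain ⟨i, -, hi⟩ := Finset.mem_image.mp (vars_rename Fin.succ f h0)
  exact Fin.succ_ne_zero i hi

lemma MvPolynomial.finSuccEquiv_rename_succ (f : MvPolynomial (Fin n) S) :
    finSuccEquiv S n (rename Fin.succ f) = Polynomial.C f := by
  induction f using MvPolynomial.induction_on with
  | C a => simp [finSuccEquiv_apply]
  | add f g hf hg => simp [hf, hg]
  | mul_X f i hf => simp [hf, finSuccEquiv_X_succ]

lemma MvPolynomial.eq_zero_of_rename_succ_add_X_zero_mul {a b c : MvPolynomial (Fin n) S}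
    (h : rename Fin.succ a + X 0 * rename Fin.succ b + X 0 ^ 2 * rename Fin.succ c = 0) :
    a = 0 ∧ b = 0 := by
  have hpoly := congrArg (finSuccEquiv S n) h
  simp only [map_add, map_mul, map_pow, finSuccEquiv_X_zero, finSuccEquiv_rename_succ,
    map_zero] at hpoly
  constructor
  · simpa using congrArg (Polynomial.coeff · 0) hpoly
  · simpa using congrArg (Polynomial.coeff · 1) hpoly

lemma twelve_mul_Rvf {u : S} (hu : u * 6 = 1) (f : MvPolynomial (Fin 3) S) :
    12 * Rvf u f = (X 0 ^ 2 - X 1) * pderiv 0 f + 4 * (X 0 * X 1 - X 2) * pderiv 1 f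
      + 6 * (X 0 * X 2 - X 1 ^ 2) * pderiv 2 f := by
  have hU : C u * 6 = (1 : MvPolynomial (Fin 3) S) := by
    rw [← map_ofNat C, ← C_mul, hu, C_1]
  simp only [Rvf, C_mul, map_ofNat]
  linear_combination ((6 * C u + 1) * (X 0 ^ 2 - X 1) * pderiv 0 f
    + 4 * (X 0 * X 1 - X 2) * pderiv 1 f + 6 * (X 0 * X 2 - X 1 ^ 2) * pderiv 2 f) * hU

lemma twelve_mul_Rvf_rename_sub_X_zero_mul {u : S} (hu : u * 6 = 1)
    (A B : MvPolynomial (Fin 2) S) :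
    12 * Rvf u (rename Fin.succ A - X 0 * rename Fin.succ B) =
      rename Fin.succ (serreD A + X 0 * B)
        + X 0 * rename Fin.succ (∑ i, ![4, 6] i • (X i * pderiv i A) - serreD B)
        + X 0 ^ 2 * rename Fin.succ (-(B + ∑ i, ![4, 6] i • (X i * pderiv i B))) := by
  have pderiv_x₄ (f : MvPolynomial (Fin 2) S) :
      pderiv 1 (rename Fin.succ f) = rename Fin.succ (pderiv 0 f) :=
    pderiv_rename (Fin.succ_injective 2) 0 f
  have pderiv_x₆ (f : MvPolynomial (Fin 2) S) :
      pderiv 2 (rename Fin.succ f) = rename Fin.succ (pderiv 1 f) :=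
    pderiv_rename (Fin.succ_injective 2) 1 f
  rw [twelve_mul_Rvf hu]
  simp only [serreD, Fin.sum_univ_two, map_sub, map_add, map_neg, map_mul, map_pow, nsmul_eq_mul,
    pderiv_mul, pderiv_zero_rename_succ, pderiv_x₄, pderiv_x₆, pderiv_X_self,
    pderiv_X_of_ne (show (0 : Fin 3) ≠ 1 by decide), pderiv_X_of_ne (show (0 : Fin 3) ≠ 2 by decide),
    rename_X, map_ofNat, map_natCast, Fin.succ_zero_eq_one, Fin.succ_one_eq_two,
    Matrix.cons_val_zero, Matrix.cons_val_one]
  ring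

end

lemma ZMod.six_ne_zero_of_five_le {p : ℕ} [hp : Fact p.Prime] (hp5 : 5 ≤ p) :
    (6 : ZMod p) ≠ 0 := by
  have hdvd : ¬ p ∣ 2 * 3 := fun h => by
    rcases hp.out.dvd_mul.mp h with h | h <;> linarith [Nat.le_of_dvd (by norm_num) h]
  exact_mod_cast (ZMod.natCast_eq_zero_iff _ p).not.mpr hdvd

theorem stmt8_general (p : ℕ) [Fact p.Prime] (hp5 : 5 ≤ p)
    (X₁ X₂ : MvPolynomial (Fin 2) (ZMod p)) (d₂ : ℕ)
    (h2 : MvPolynomial.IsWeightedHomogeneous ![4, 6] X₂ d₂)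
    (hd2 : (d₂ : ZMod p) = 1)
    (h : Rvf ((6 : ZMod p)⁻¹)
        (rename (![1, 2] : Fin 2 → Fin 3) X₂ - X 0 * rename (![1, 2] : Fin 2 → Fin 3) X₁)
      = 0) :
    serreD X₁ = X₂ ∧ serreD X₂ = -(X 0 * X₁) := by
  have hu : (6 : ZMod p)⁻¹ * 6 = 1 := inv_mul_cancel₀ (ZMod.six_ne_zero_of_five_le hp5)
  rw [show (![1, 2] : Fin 2 → Fin 3) = Fin.succ by decide] at h
  have h12 := congrArg (12 * ·) h
  simp only [mul_zero, twelve_mul_Rvf_rename_sub_X_zero_mul hu] at h12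
  obtain ⟨hX₂, hX₁⟩ := eq_zero_of_rename_succ_add_X_zero_mul h12
  have euler : ∑ i, ![4, 6] i • (X i * pderiv i X₂) = X₂ := by
    rw [h2.sum_weight_X_mul_pderiv, nsmul_eq_mul, ← map_natCast C, hd2, C_1, one_mul]
  rw [euler, sub_eq_zero] at hX₁
  exact ⟨hX₁.symm, eq_neg_of_add_eq_zero_left hX₂⟩

/-- if `R(X₂ − x₂X₁) = 0` for weighted-homogeneous `X₁, X₂ ∈ 𝔽_p[x₄,x₆]` of
degrees `≡ −1` and `≡ 1 (mod p)`, then `∂X₁ = X₂` and `∂X₂ = −x₄X₁`. -/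
theorem stmt8 (p : ℕ) [Fact p.Prime] (hp5 : 5 ≤ p)
    (X₁ X₂ : MvPolynomial (Fin 2) (ZMod p)) (d₁ d₂ : ℕ)
    (h1 : MvPolynomial.IsWeightedHomogeneous ![4, 6] X₁ d₁)
    (h2 : MvPolynomial.IsWeightedHomogeneous ![4, 6] X₂ d₂)
    (hd1 : (d₁ : ZMod p) = -1) (hd2 : (d₂ : ZMod p) = 1)
    (h : Rvf ((6 : ZMod p)⁻¹)
        (rename (![1, 2] : Fin 2 → Fin 3) X₂ - X 0 * rename (![1, 2] : Fin 2 → Fin 3) X₁)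
      = 0) :
    serreD X₁ = X₂ ∧ serreD X₂ = -(X 0 * X₁) :=
  stmt8_general p hp5 X₁ X₂ d₂ h2 hd2 h
end
end

section
/- Let p ≥ 5 be a prime and let X₁, X₂ ∈ 𝔽_p[x₄,x₆] be homogeneous (for the weighted grading) of weighted degrees d₁ and d₂ with d₁ ≡ −1 (mod p) and d₂ ≡ 1 (mod p). If ∂X₁ = X₂ and ∂X₂ = −x₄·X₁, then R(X₂ − x₂·X₁) = 0 in 𝔽_p[x₂,x₄,x₆]. -/
open MvPolynomial

noncomputable section

/-!
By Euler's identity, on the image of a weighted-homogeneous `Q ∈ S[x₄,x₆]` of weight `d` the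
Ramanujan field acts as `12 R Q = d x₂ Q + ∂Q`, while `R (x₂ g) = ((x₂² − x₄)/12) g + x₂ R g`.
With `d₂ ≡ 1`, `d₁ ≡ −1`, `∂X₁ = X₂` and `∂X₂ = −x₄X₁` this gives
`12 R (X₂ − x₂X₁) = (x₂X₂ − x₄X₁) − (x₂² − x₄)X₁ − x₂(−x₂X₁ + X₂) = 0`.
-/

namespace MvPolynomial

variable {S : Type*} [CommRing S]

lemma pderiv_zero_rename_fin_two (Q : MvPolynomial (Fin 2) S) :
    pderiv 0 (rename (![1, 2] : Fin 2 → Fin 3) Q) = 0 := by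
  apply pderiv_eq_zero_of_notMem_vars
  intro h
  obtain ⟨i, -, hi⟩ := Finset.mem_image.mp (vars_rename _ Q h)
  fin_cases i <;> simp at hi

lemma pderiv_one_rename_fin_two (Q : MvPolynomial (Fin 2) S) :
    pderiv 1 (rename (![1, 2] : Fin 2 → Fin 3) Q) = rename ![1, 2] (pderiv 0 Q) :=
  pderiv_rename (f := ![1, 2]) (by decide) 0 Q

lemma pderiv_two_rename_fin_two (Q : MvPolynomial (Fin 2) S) :
    pderiv 2 (rename (![1, 2] : Fin 2 → Fin 3) Q) = rename ![1, 2] (pderiv 1 Q) :=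
  pderiv_rename (f := ![1, 2]) (by decide) 1 Q

end MvPolynomial

section Ramanujan

variable {S : Type*} [CommRing S] (u : S)

lemma Rvf_sub (f g : MvPolynomial (Fin 3) S) : Rvf u (f - g) = Rvf u f - Rvf u g := by
  simp only [Rvf, map_sub]
  ring

lemma Rvf_X_zero_mul (g : MvPolynomial (Fin 3) S) :
    Rvf u (X 0 * g) = C (3 * u * u) * (X 0 ^ 2 - X 1) * g + X 0 * Rvf u g := by
  simp only [Rvf, C_mul, Derivation.leibniz, smul_eq_mul, pderiv_X, Pi.single_eq_same,
    Pi.single_eq_of_ne, ne_eq, zero_ne_one, not_false_eq_true, Fin.reduceEq, mul_one, mul_zero,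
    add_zero]
  ring

variable {u}

lemma Rvf_rename_of_isWeightedHomogeneous (hu : 6 * u = 1) {Q : MvPolynomial (Fin 2) S} {d : ℕ}
    (hQ : Q.IsWeightedHomogeneous ![4, 6] d) :
    Rvf u (rename (![1, 2] : Fin 2 → Fin 3) Q)
      = C (3 * u * u) * (C (d : S) * X 0 * rename ![1, 2] Q + rename ![1, 2] (serreD Q)) := by
  have euler := congrArg (rename (![1, 2] : Fin 2 → Fin 3)) hQ.sum_weight_X_mul_pderiv
  have hC : (6 : MvPolynomial (Fin 3) S) * C u = 1 := by
    rw [← map_ofNat C, ← map_mul, hu, map_one]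
  simp only [Fin.sum_univ_two, map_add, map_mul, rename_X, nsmul_eq_mul, map_natCast,
    Matrix.cons_val_zero, Matrix.cons_val_one] at euler
  simp only [Rvf, serreD, pderiv_zero_rename_fin_two, pderiv_one_rename_fin_two,
    pderiv_two_rename_fin_two, map_sub, map_neg, map_mul, map_pow,
    rename_X, map_ofNat, map_natCast, Matrix.cons_val_zero, Matrix.cons_val_one]
  linear_combination (3 * C u * C u * X 0) * euler
    - (2 * C u * (X 0 * X 1 - X 2) * rename ![1, 2] (pderiv 0 Q)
      + 3 * C u * (X 0 * X 2 - X 1 ^ 2) * rename ![1, 2] (pderiv 1 Q)) * hC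

end Ramanujan

lemma ZMod.six_ne_zero {p : ℕ} [Fact p.Prime] (hp5 : 5 ≤ p) : (6 : ZMod p) ≠ 0 := by
  intro h
  have hdvd : p ∣ 2 * 3 := (ZMod.natCast_eq_zero_iff _ p).mp (by exact_mod_cast h)
  rcases (Fact.out : p.Prime).dvd_mul.mp hdvd with h2 | h3
  · exact absurd (Nat.le_of_dvd two_pos h2) (by omega)
  · exact absurd (Nat.le_of_dvd three_pos h3) (by omega)

/-- if `∂X₁ = X₂` and `∂X₂ = −x₄X₁` for weighted-homogeneous
`X₁, X₂ ∈ 𝔽_p[x₄,x₆]` of degrees `≡ −1` and `≡ 1 (mod p)`, then `R(X₂ − x₂X₁) = 0`. -/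
theorem stmt9 (p : ℕ) [Fact p.Prime] (hp5 : 5 ≤ p)
    (X₁ X₂ : MvPolynomial (Fin 2) (ZMod p)) (d₁ d₂ : ℕ)
    (h1 : MvPolynomial.IsWeightedHomogeneous ![4, 6] X₁ d₁)
    (h2 : MvPolynomial.IsWeightedHomogeneous ![4, 6] X₂ d₂)
    (hd1 : (d₁ : ZMod p) = -1) (hd2 : (d₂ : ZMod p) = 1)
    (hX1 : serreD X₁ = X₂) (hX2 : serreD X₂ = -(X 0 * X₁)) :
    Rvf ((6 : ZMod p)⁻¹)
        (rename (![1, 2] : Fin 2 → Fin 3) X₂ - X 0 * rename (![1, 2] : Fin 2 → Fin 3) X₁)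
      = 0 := by
  have hu : (6 : ZMod p) * 6⁻¹ = 1 := mul_inv_cancel₀ (ZMod.six_ne_zero hp5)
  rw [Rvf_sub, Rvf_X_zero_mul, Rvf_rename_of_isWeightedHomogeneous hu h1,
    Rvf_rename_of_isWeightedHomogeneous hu h2, hd1, hd2, hX1, hX2]
  simp only [map_neg, map_one, map_mul, rename_X, Matrix.cons_val_zero]
  ring
end
end

section
/- For every prime p ≥ 5, the polynomial x₄³ − x₆² divides neither Ã nor B̃ in 𝔽_p[x₄,x₆]. -/
open MvPolynomial

noncomputable section

/-! At the cusp `q = 0` every `E_ν` takes the value `1`, so `A(1, 1) = B(1, 1) = 1`; reducing the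
`p`-integral coefficients gives `Ã(1, 1) = B̃(1, 1) = 1` in `𝔽_p`, while `x₄³ − x₆²` vanishes at
`(1, 1)`. -/

section PIntegral

variable {p : ℕ} [Fact p.Prime]

lemma rred_eq_cast (r : ℚ) : rred p r = r := by
  rw [Rat.cast_def, div_eq_mul_inv, rred]

lemma Rat.not_dvd_den_add {q r : ℚ} (hq : ¬ p ∣ q.den) (hr : ¬ p ∣ r.den) :
    ¬ p ∣ (q + r).den := fun h => by
  rcases (Nat.Prime.dvd_mul Fact.out).1 (h.trans (Rat.add_den_dvd q r)) with h | h
  exacts [hq h, hr h]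

lemma Rat.cast_sum_zmod_of_not_dvd_den {ι : Type*} (s : Finset ι) (f : ι → ℚ)
    (hf : ∀ i ∈ s, ¬ p ∣ (f i).den) :
    ¬ p ∣ (∑ i ∈ s, f i).den ∧ ((∑ i ∈ s, f i : ℚ) : ZMod p) = ∑ i ∈ s, (f i : ZMod p) := by
  classical
  induction s using Finset.induction_on with
  | empty => simp [Nat.Prime.ne_one Fact.out]
  | insert a s ha ih =>
    obtain ⟨hfa, hfs⟩ := Finset.forall_mem_insert .. |>.1 hf
    obtain ⟨hden, hcast⟩ := ih hfs
    rw [Finset.sum_insert ha, Finset.sum_insert ha, ← hcast]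
    exact ⟨Rat.not_dvd_den_add hfa hden, Rat.cast_add_of_ne_zero
      (by rwa [Ne, ZMod.natCast_eq_zero_iff]) (by rwa [Ne, ZMod.natCast_eq_zero_iff])⟩

lemma MvPolynomial.eval_one_eq_cast_of_coeff_eq_rred {σ : Type*} {Q : MvPolynomial σ ℚ}
    (hQ : ∀ m, ¬ p ∣ (Q.coeff m).den) {Qt : MvPolynomial σ (ZMod p)}
    (hQt : ∀ m, Qt.coeff m = rred p (Q.coeff m)) :
    eval (fun _ => 1) Qt = ((eval (fun _ => 1) Q : ℚ) : ZMod p) := by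
  have hsupp : Qt.support ⊆ Q.support := fun m hm => by
    rw [mem_support_iff, hQt, rred_eq_cast] at hm
    exact mem_support_iff.2 fun h => hm (by simp [h])
  simp only [eval_eq, one_pow, Finset.prod_const_one, mul_one]
  rw [(Rat.cast_sum_zmod_of_not_dvd_den _ _ fun m _ => hQ m).2,
    Finset.sum_subset hsupp fun m _ hm => by rw [notMem_support_iff.1 hm]]
  simp only [hQt, rred_eq_cast]

end PIntegral

lemma constantCoeff_Eis (ν : ℕ) : PowerSeries.constantCoeff (Eis ν) = 1 := by
  simp [Eis]

lemma eval_one_eq_one_of_aeval_eq_Eis {Q : MvPolynomial (Fin 2) ℚ} {ν : ℕ}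
    (hQ : aeval ![Eis 4, Eis 6] Q = Eis ν) : eval (fun _ => 1) Q = 1 := by
  have h := congrArg PowerSeries.constantCoeff.toRatAlgHom hQ
  rw [← AlgHom.comp_apply, comp_aeval] at h
  have hv : (fun i => PowerSeries.constantCoeff.toRatAlgHom (![Eis 4, Eis 6] i)) = fun _ => 1 := by
    ext i; fin_cases i <;> simp [constantCoeff_Eis]
  rwa [hv, aeval_eq_eval, RingHom.toRatAlgHom_apply, constantCoeff_Eis] at h

lemma X_zero_pow_three_sub_X_one_sq_not_dvd {R : Type*} [CommRing R]
    {Q : MvPolynomial (Fin 2) R} (hQ : eval (fun _ => 1) Q ≠ 0) :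
    ¬ (X 0 ^ 3 - X 1 ^ 2 : MvPolynomial (Fin 2) R) ∣ Q := by
  rintro h
  obtain ⟨c, hc⟩ := map_dvd (eval fun _ => 1) h
  simp [hc] at hQ

lemma not_dvd_reduction_of_aeval_eq_Eis (p : ℕ) [Fact p.Prime] {Q : MvPolynomial (Fin 2) ℚ}
    (hQint : ∀ m, ¬ p ∣ (Q.coeff m).den) {ν : ℕ} (hQE : aeval ![Eis 4, Eis 6] Q = Eis ν)
    {Qt : MvPolynomial (Fin 2) (ZMod p)} (hQt : ∀ m, Qt.coeff m = rred p (Q.coeff m)) :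
    ¬ (X 0 ^ 3 - X 1 ^ 2 : MvPolynomial (Fin 2) (ZMod p)) ∣ Qt := by
  apply X_zero_pow_three_sub_X_one_sq_not_dvd
  rw [eval_one_eq_cast_of_coeff_eq_rred hQint hQt, eval_one_eq_one_of_aeval_eq_Eis hQE,
    Rat.cast_one]
  exact one_ne_zero

theorem stmt12_general (p : ℕ) [Fact p.Prime]
    (A B : MvPolynomial (Fin 2) ℚ)
    (hAint : ∀ m, ¬ p ∣ (A.coeff m).den)
    (hBint : ∀ m, ¬ p ∣ (B.coeff m).den)
    (hAE : MvPolynomial.aeval ![Eis 4, Eis 6] A = Eis (p - 1))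
    (hBE : MvPolynomial.aeval ![Eis 4, Eis 6] B = Eis (p + 1))
    (At Bt : MvPolynomial (Fin 2) (ZMod p))
    (hAt : ∀ m, At.coeff m = rred p (A.coeff m))
    (hBt : ∀ m, Bt.coeff m = rred p (B.coeff m))
    :
    ¬ (X 0 ^ 3 - X 1 ^ 2 : MvPolynomial (Fin 2) (ZMod p)) ∣ At ∧
    ¬ (X 0 ^ 3 - X 1 ^ 2 : MvPolynomial (Fin 2) (ZMod p)) ∣ Bt :=
  ⟨not_dvd_reduction_of_aeval_eq_Eis p hAint hAE hAt,
    not_dvd_reduction_of_aeval_eq_Eis p hBint hBE hBt⟩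

/-- x₄³ − x₆² divides neither Ã nor B̃. -/
theorem stmt12 (p : ℕ) [Fact p.Prime] (hp5 : 5 ≤ p)
    (A B : MvPolynomial (Fin 2) ℚ)
    (hAhom : MvPolynomial.IsWeightedHomogeneous ![4, 6] A (p - 1))
    (hBhom : MvPolynomial.IsWeightedHomogeneous ![4, 6] B (p + 1))
    (hAint : ∀ m, ¬ p ∣ (A.coeff m).den)
    (hBint : ∀ m, ¬ p ∣ (B.coeff m).den)
    (hAE : MvPolynomial.aeval ![Eis 4, Eis 6] A = Eis (p - 1))
    (hBE : MvPolynomial.aeval ![Eis 4, Eis 6] B = Eis (p + 1))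
    (At Bt : MvPolynomial (Fin 2) (ZMod p))
    (hAt : ∀ m, At.coeff m = rred p (A.coeff m))
    (hBt : ∀ m, Bt.coeff m = rred p (B.coeff m))
    :
    ¬ (X 0 ^ 3 - X 1 ^ 2 : MvPolynomial (Fin 2) (ZMod p)) ∣ At ∧
    ¬ (X 0 ^ 3 - X 1 ^ 2 : MvPolynomial (Fin 2) (ZMod p)) ∣ Bt :=
  stmt12_general p A B hAint hBint hAE hBE At Bt hAt hBt
end
end

section
/- Let S be a commutative ring in which 6 is invertible and let L := S[x₂,x₄,x₆][(x₄³ − x₆²)^{-1}] be the localization at the powers of x₄³ − x₆². The derivations R, F, H extend uniquely to S-derivations of L, and (R, F, H) is a basis of the L-module of S-derivations of L: every S-derivation D of L can be written as D = P₁·R + P₂·F + P₃·H with P₁, P₂, P₃ ∈ L, and if P₁·R + P₂·F + P₃·H = 0 for P₁, P₂, P₃ ∈ L, then P₁ = P₂ = P₃ = 0. -/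
open MvPolynomial

noncomputable section

/-- The localization `L = S[x₂,x₄,x₆][(x₄³ − x₆²)⁻¹]`. -/
abbrev Lloc (S : Type*) [CommRing S] : Type _ :=
  Localization.Away ((X 1) ^ 3 - (X 2) ^ 2 : MvPolynomial (Fin 3) S)

/-! Derivations of a localization `L` of `A` are determined by their values on `A`, and every
derivation `A → L` extends to `L`, because a derivation `A → L` is the same as a ring map
`A → L[ε]` lifting `algebraMap`, and such maps extend along localizations. Hence an
`S`-derivation of `L = S[x₂,x₄,x₆][Δ⁻¹]` is determined by its values at `x₂, x₄, x₆`, and three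
derivations form an `L`-basis as soon as the matrix of these values is invertible. For
`(R, F, H)` its determinant is `24 Δ`, with `Δ = x₄³ − x₆²`, which is a unit in `L`. -/

theorem Derivation.finset_sum_apply {ι R A M : Type*} [CommSemiring R] [CommSemiring A]
    [AddCommMonoid M] [Algebra R A] [Module A M] [Module R M] (s : Finset ι)
    (D : ι → Derivation R A M) (a : A) : (∑ i ∈ s, D i) a = ∑ i ∈ s, D i a := by
  rw [← Derivation.coeFnAddMonoidHom_apply, map_sum, Finset.sum_apply]
  rfl

section Derivation

variable {ι S L : Type*} [Fintype ι] [DecidableEq ι] [CommRing S] [CommRing L] [Algebra S L]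
  {E : ι → Derivation S L L} {x : ι → L}

theorem Derivation.linearIndependent_of_isUnit_det
    (hE : IsUnit (Matrix.of fun i j => E i (x j)).det) : LinearIndependent L E := by
  refine Fintype.linearIndependent_iff.2 fun P hP => congrFun (?_ : P = 0)
  refine Matrix.vecMul_injective_of_isUnit ((Matrix.isUnit_iff_isUnit_det _).2 hE)
    (funext fun j => ?_)
  simpa [Matrix.vecMul, dotProduct, Derivation.finset_sum_apply] using
    congrArg (fun D : Derivation S L L => D (x j)) hP

theorem Derivation.span_eq_top_of_isUnit_det
    (hx : ∀ D₁ D₂ : Derivation S L L, (∀ j, D₁ (x j) = D₂ (x j)) → D₁ = D₂)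
    (hE : IsUnit (Matrix.of fun i j => E i (x j)).det) :
    Submodule.span L (Set.range E) = ⊤ := by
  refine eq_top_iff.2 fun D _ => (Submodule.mem_span_range_iff_exists_fun L).2 ?_
  obtain ⟨P, hP⟩ := Matrix.vecMul_surjective_iff_isUnit.2 ((Matrix.isUnit_iff_isUnit_det _).2 hE)
    fun j => D (x j)
  refine ⟨P, hx _ _ fun j => ?_⟩
  simpa [Matrix.vecMul, dotProduct, Derivation.finset_sum_apply] using congrFun hP j

theorem Derivation.isUnit_det_of_apply_eq_algebraMap {A : Type*} [CommRing A] [Algebra A L]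
    (a : ι → A) (c : Matrix ι ι A)
    (hE : ∀ i j, E i (algebraMap A L (a j)) = algebraMap A L (c i j))
    (hc : IsUnit (algebraMap A L c.det)) :
    IsUnit (Matrix.of fun i j => E i (algebraMap A L (a j))).det := by
  have : (Matrix.of fun i j => E i (algebraMap A L (a j))) = c.map (algebraMap A L) := by
    ext i j
    simp [hE]
  rwa [this, ← RingHom.mapMatrix_apply, ← RingHom.map_det]

end Derivation

section Localization

open TrivSqZeroExt

variable {S A L : Type*} [CommRing S] [CommRing A] [CommRing L] [Algebra S L] [Algebra A L]
  (M : Submonoid A) [IsLocalization M L]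

include M in
theorem IsLocalization.derivation_ext {D₁ D₂ : Derivation S L L}
    (h : ∀ a, D₁ (algebraMap A L a) = D₂ (algebraMap A L a)) : D₁ = D₂ := by
  ext x
  obtain ⟨⟨a, s⟩, hx⟩ := IsLocalization.surj M x
  have key : D₁ (x * algebraMap A L s) = D₂ (x * algebraMap A L s) := by rw [hx]; exact h a
  rw [Derivation.leibniz, Derivation.leibniz, h, add_right_inj, smul_eq_mul, smul_eq_mul] at key
  exact (IsLocalization.map_units L s).mul_left_cancel key

variable [Algebra S A] [IsScalarTower S A L]

def Derivation.toDualNumber (D : Derivation S A L) : A →+* DualNumber L where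
  toFun a := inl (algebraMap A L a) + inr (D a)
  map_one' := by simp
  map_mul' a b := by
    refine TrivSqZeroExt.ext (by simp) ?_
    simp only [snd_mul, snd_add, snd_inl, snd_inr, fst_add, fst_inl, fst_inr, Derivation.leibniz,
      op_smul_eq_smul, smul_eq_mul, Algebra.smul_def, map_mul, add_zero, zero_add]
  map_zero' := by simp
  map_add' a b := by simp only [map_add, inl_add, inr_add]; abel

include M in
theorem IsLocalization.exists_derivation_extend (D : Derivation S A L) :
    ∃ D' : Derivation S L L, ∀ a, D' (algebraMap A L a) = D a := by
  have hunit : ∀ s : M, IsUnit (D.toDualNumber s) := fun s => by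
    rw [TrivSqZeroExt.isUnit_iff_isUnit_fst]
    simpa [Derivation.toDualNumber] using IsLocalization.map_units L s
  let τ : L →+* DualNumber L := IsLocalization.lift hunit
  have hτ : ∀ a, τ (algebraMap A L a) = D.toDualNumber a := IsLocalization.lift_eq hunit
  have hfst : ∀ x : L, (τ x).fst = x := by
    have : (fstHom L L L).toRingHom.comp τ = RingHom.id L :=
      IsLocalization.ringHom_ext M (RingHom.ext fun a => by simp [hτ, Derivation.toDualNumber])
    exact fun x => congrArg (fun ψ : L →+* L => ψ x) this
  refine ⟨{ toFun := fun x => (τ x).snd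
            map_add' := fun x y => by simp
            map_smul' := fun s x => ?_
            map_one_eq_zero' := by simp
            leibniz' := fun x y => by simp [hfst, mul_comm] }, fun a => by
              simp [hτ, Derivation.toDualNumber]⟩
  have hs : algebraMap S L s = algebraMap A L (algebraMap S A s) :=
    IsScalarTower.algebraMap_apply S A L s
  simp [Algebra.smul_def, hs, hτ, Derivation.toDualNumber]

include M in
theorem IsLocalization.existsUnique_derivation_extend (D : Derivation S A A) :
    ∃! D' : Derivation S L L, ∀ a, D' (algebraMap A L a) = algebraMap A L (D a) := by
  obtain ⟨D', hD'⟩ := IsLocalization.exists_derivation_extend M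
    ((Algebra.linearMap A L).compDer D)
  exact ⟨D', hD', fun D'' hD'' => IsLocalization.derivation_ext M fun a => by
    rw [hD'', hD']; rfl⟩

end Localization

section PolyVectorField

variable {σ S : Type*} [CommRing S]

theorem IsLocalization.derivation_ext_X {L : Type*} [CommRing L] [Algebra S L]
    [Algebra (MvPolynomial σ S) L] [IsScalarTower S (MvPolynomial σ S) L]
    (M : Submonoid (MvPolynomial σ S)) [IsLocalization M L] {D₁ D₂ : Derivation S L L}
    (h : ∀ i, D₁ (algebraMap _ L (X i : MvPolynomial σ S)) =
      D₂ (algebraMap _ L (X i : MvPolynomial σ S))) : D₁ = D₂ := by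
  refine IsLocalization.derivation_ext M fun f => ?_
  have : D₁.compAlgebraMap (MvPolynomial σ S) = D₂.compAlgebraMap (MvPolynomial σ S) :=
    MvPolynomial.derivation_ext fun i => by simpa using h i
  simpa using DFunLike.congr_fun this f

variable [Fintype σ]

def polyVectorField (c : σ → MvPolynomial σ S) :
    Derivation S (MvPolynomial σ S) (MvPolynomial σ S) :=
  ∑ i, c i • pderiv i

theorem polyVectorField_apply (c : σ → MvPolynomial σ S) (f : MvPolynomial σ S) :
    polyVectorField c f = ∑ i, c i * pderiv i f := by
  simp [polyVectorField, Derivation.finset_sum_apply]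

theorem polyVectorField_X [DecidableEq σ] (c : σ → MvPolynomial σ S) (j : σ) :
    polyVectorField c (X j) = c j := by
  simp [polyVectorField_apply, pderiv_X, Pi.single_apply]

end PolyVectorField

section Ramanujan

variable {S : Type*} [CommRing S]

def ramanujanCoeff (u : S) : Fin 3 → MvPolynomial (Fin 3) S :=
  ![C (3 * u * u) * (X 0 ^ 2 - X 1), C (2 * u) * (X 0 * X 1 - X 2),
    C (3 * u) * (X 0 * X 2 - X 1 ^ 2)]

theorem Rvf_eq_polyVectorField (u : S) : Rvf u = polyVectorField (ramanujanCoeff u) := by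
  funext f
  simp [Rvf, ramanujanCoeff, polyVectorField_apply, Fin.sum_univ_three]

theorem Fvf_eq_polyVectorField :
    (Fvf : MvPolynomial (Fin 3) S → MvPolynomial (Fin 3) S) = polyVectorField ![-12, 0, 0] := by
  funext f
  simp [Fvf, polyVectorField_apply, Fin.sum_univ_three]

theorem Hvf_eq_polyVectorField :
    (Hvf : MvPolynomial (Fin 3) S → MvPolynomial (Fin 3) S) =
      polyVectorField ![C 2 * X 0, C 4 * X 1, C 6 * X 2] := by
  funext f
  simp [Hvf, polyVectorField_apply, Fin.sum_univ_three]

def ramanujanFrameMatrix (u : S) : Matrix (Fin 3) (Fin 3) (MvPolynomial (Fin 3) S) :=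
  Matrix.of ![ramanujanCoeff u, ![-12, 0, 0], ![C 2 * X 0, C 4 * X 1, C 6 * X 2]]

theorem det_ramanujanFrameMatrix {u : S} (hu : 6 * u = 1) :
    (ramanujanFrameMatrix u).det = C 24 * (X 1 ^ 3 - X 2 ^ 2) := by
  have hC : (6 : MvPolynomial (Fin 3) S) * C u = 1 := by
    rw [← map_ofNat C, ← C_mul, hu, C_1]
  rw [Matrix.det_fin_three]
  simp [ramanujanFrameMatrix, ramanujanCoeff, map_ofNat]
  linear_combination (24 * (X 1 ^ 3 - X 2 ^ 2) : MvPolynomial (Fin 3) S) * hC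

theorem isUnit_algebraMap_det_ramanujanFrameMatrix {u : S} (hu : 6 * u = 1) :
    IsUnit (algebraMap (MvPolynomial (Fin 3) S) (Lloc S) (ramanujanFrameMatrix u).det) := by
  have h24 : IsUnit (24 : S) :=
    IsUnit.of_mul_eq_one (9 * u ^ 3) (by linear_combination (36 * u ^ 2 + 6 * u + 1) * hu)
  rw [det_ramanujanFrameMatrix hu, map_mul]
  exact ((h24.map C).map _).mul (IsLocalization.Away.algebraMap_isUnit _)

end Ramanujan

/-- `R, F, H` extend uniquely to `S`-derivations of
`L = S[x₂,x₄,x₆][(x₄³−x₆²)⁻¹]` and form a basis of the `L`-module of `S`-derivations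
of `L`. -/
theorem stmt13 (S : Type*) [CommRing S] (u : S) (hu : 6 * u = 1) :
    (∃! R' : Derivation S (Lloc S) (Lloc S),
        ∀ f : MvPolynomial (Fin 3) S,
          R' (algebraMap (MvPolynomial (Fin 3) S) (Lloc S) f) =
            algebraMap (MvPolynomial (Fin 3) S) (Lloc S) (Rvf u f)) ∧
    (∃! F' : Derivation S (Lloc S) (Lloc S),
        ∀ f : MvPolynomial (Fin 3) S,
          F' (algebraMap (MvPolynomial (Fin 3) S) (Lloc S) f) =
            algebraMap (MvPolynomial (Fin 3) S) (Lloc S) (Fvf f)) ∧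
    (∃! H' : Derivation S (Lloc S) (Lloc S),
        ∀ f : MvPolynomial (Fin 3) S,
          H' (algebraMap (MvPolynomial (Fin 3) S) (Lloc S) f) =
            algebraMap (MvPolynomial (Fin 3) S) (Lloc S) (Hvf f)) ∧
    ∀ R' F' H' : Derivation S (Lloc S) (Lloc S),
      (∀ f : MvPolynomial (Fin 3) S,
          R' (algebraMap (MvPolynomial (Fin 3) S) (Lloc S) f) =
            algebraMap (MvPolynomial (Fin 3) S) (Lloc S) (Rvf u f)) →
      (∀ f : MvPolynomial (Fin 3) S,
          F' (algebraMap (MvPolynomial (Fin 3) S) (Lloc S) f) =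
            algebraMap (MvPolynomial (Fin 3) S) (Lloc S) (Fvf f)) →
      (∀ f : MvPolynomial (Fin 3) S,
          H' (algebraMap (MvPolynomial (Fin 3) S) (Lloc S) f) =
            algebraMap (MvPolynomial (Fin 3) S) (Lloc S) (Hvf f)) →
      (∀ D : Derivation S (Lloc S) (Lloc S), ∃ P₁ P₂ P₃ : Lloc S,
          ∀ x : Lloc S, D x = P₁ * R' x + P₂ * F' x + P₃ * H' x) ∧
      (∀ P₁ P₂ P₃ : Lloc S,
          (∀ x : Lloc S, P₁ * R' x + P₂ * F' x + P₃ * H' x = 0) →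
          P₁ = 0 ∧ P₂ = 0 ∧ P₃ = 0) := by
  let M := Submonoid.powers ((X 1) ^ 3 - (X 2) ^ 2 : MvPolynomial (Fin 3) S)
  rw [Rvf_eq_polyVectorField, Fvf_eq_polyVectorField, Hvf_eq_polyVectorField]
  refine ⟨IsLocalization.existsUnique_derivation_extend M _,
    IsLocalization.existsUnique_derivation_extend M _,
    IsLocalization.existsUnique_derivation_extend M _, fun R' F' H' hR hF hH => ?_⟩
  have hvals : ∀ i j, ![R', F', H'] i (algebraMap _ (Lloc S) (X j : MvPolynomial (Fin 3) S)) =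
      algebraMap _ _ (ramanujanFrameMatrix u i j) := by
    intro i j
    fin_cases i <;> simp [ramanujanFrameMatrix, hR, hF, hH, polyVectorField_X]
  have hdet := Derivation.isUnit_det_of_apply_eq_algebraMap X _ hvals
    (isUnit_algebraMap_det_ramanujanFrameMatrix hu)
  have hspan := Derivation.span_eq_top_of_isUnit_det
    (fun _ _ => IsLocalization.derivation_ext_X M) hdet
  have hind := Derivation.linearIndependent_of_isUnit_det hdet
  refine ⟨fun D => ?_, fun P₁ P₂ P₃ h => ?_⟩
  · obtain ⟨P, rfl⟩ := (Submodule.mem_span_range_iff_exists_fun _).1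
      (hspan.symm ▸ Submodule.mem_top : D ∈ Submodule.span _ (Set.range ![R', F', H']))
    exact ⟨P 0, P 1, P 2, fun x => by simp [Fin.sum_univ_three]⟩
  · have := Fintype.linearIndependent_iff.1 hind ![P₁, P₂, P₃]
      (by ext x; simpa [Derivation.finset_sum_apply, Fin.sum_univ_three] using h x)
    exact ⟨this 0, this 1, this 2⟩
end
end

section
/- Let S be a commutative ring in which 6 is invertible. As S-derivations of S[x₂,x₄,x₆], the commutators ⁅D₁,D₂⁆ := D₁∘D₂ − D₂∘D₁ satisfy ⁅R,F⁆ = H, ⁅H,F⁆ = −2F, and ⁅H,R⁆ = 2R; i.e., (R, F, H) forms an sl₂-triple. -/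
/-! `R`, `F` and `H` are vector fields, i.e. derivations of `S[x₂,x₄,x₆]`, and a derivation of a
polynomial ring is determined by its values on the variables. So each relation is a comparison of
coefficients, `⁅D₁, D₂⁆ xᵢ = D₁ (D₂ xᵢ) − D₂ (D₁ xᵢ)`. The coefficients of `R` are weighted
homogeneous (`x₂, x₄, x₆` of weights `2, 4, 6`) of weight two more than the variable they multiply,
which gives `⁅H, R⁆ = 2R`; `⁅R, F⁆ = H` uses `36u² = 1`. -/

open MvPolynomial

noncomputable section

@[simp]
theorem Derivation.map_ofNat {R A M : Type*} [CommSemiring R] [CommSemiring A] [AddCommMonoid M]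
    [Algebra R A] [Module A M] [Module R M] (D : Derivation R A M) (n : ℕ) [n.AtLeastTwo] :
    D (ofNat(n) : A) = 0 :=
  D.map_natCast n

namespace MvPolynomial

variable {R σ : Type*} [Fintype σ]

section CommSemiring

variable [CommSemiring R]

def vectorField (a : σ → MvPolynomial σ R) :
    Derivation R (MvPolynomial σ R) (MvPolynomial σ R) :=
  ∑ i, a i • pderiv i

theorem vectorField_apply (a : σ → MvPolynomial σ R) (f : MvPolynomial σ R) :
    vectorField a f = ∑ i, a i * pderiv i f := by
  rw [vectorField, ← Derivation.coeFnAddMonoidHom_apply, map_sum, Finset.sum_apply]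
  rfl

@[simp]
theorem vectorField_X (a : σ → MvPolynomial σ R) (i : σ) : vectorField a (X i) = a i := by
  classical
  simp [vectorField_apply, Pi.single_apply]

theorem smul_vectorField (c : MvPolynomial σ R) (a : σ → MvPolynomial σ R) :
    c • vectorField a = vectorField (c • a) :=
  derivation_ext fun i => by simp

end CommSemiring

theorem lie_vectorField [CommRing R] (a b : σ → MvPolynomial σ R) :
    ⁅vectorField a, vectorField b⁆ =
      vectorField fun i => vectorField a (b i) - vectorField b (a i) :=
  derivation_ext fun i => by simp [Derivation.commutator_apply]

end MvPolynomial

section Ramanujan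

variable {S : Type*} [CommRing S]

def ramanujanR (u : S) : Derivation S (MvPolynomial (Fin 3) S) (MvPolynomial (Fin 3) S) :=
  vectorField ![C (3 * u * u) * (X 0 ^ 2 - X 1), C (2 * u) * (X 0 * X 1 - X 2),
    C (3 * u) * (X 0 * X 2 - X 1 ^ 2)]

variable (S) in
def ramanujanF : Derivation S (MvPolynomial (Fin 3) S) (MvPolynomial (Fin 3) S) :=
  vectorField ![C (-12), 0, 0]

variable (S) in
def ramanujanH : Derivation S (MvPolynomial (Fin 3) S) (MvPolynomial (Fin 3) S) :=
  vectorField ![C 2 * X 0, C 4 * X 1, C 6 * X 2]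

theorem coe_ramanujanR (u : S) : ⇑(ramanujanR u) = Rvf u := by
  ext1 f
  simp [ramanujanR, Rvf, vectorField_apply, Fin.sum_univ_three]

theorem coe_ramanujanF : ⇑(ramanujanF S) = Fvf := by
  ext1 f
  simp [ramanujanF, Fvf, vectorField_apply, Fin.sum_univ_three, map_ofNat]

theorem coe_ramanujanH : ⇑(ramanujanH S) = Hvf := by
  ext1 f
  simp [ramanujanH, Hvf, vectorField_apply, Fin.sum_univ_three]

theorem lie_ramanujanR_ramanujanF {u : S} (hu : 6 * u = 1) :
    ⁅ramanujanR u, ramanujanF S⁆ = ramanujanH S := by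
  have hC : 6 * C u = (1 : MvPolynomial (Fin 3) S) := by rw [← map_ofNat C, ← C_mul, hu, C_1]
  rw [ramanujanR, ramanujanF, ramanujanH, lie_vectorField]
  congr 1
  funext i
  fin_cases i <;> simp [vectorField_apply, Fin.sum_univ_three, map_ofNat]
  · linear_combination 2 * X 0 * (6 * C u + 1) * hC
  · linear_combination 4 * X 1 * hC
  · linear_combination 6 * X 2 * hC

theorem lie_ramanujanH_ramanujanF :
    ⁅ramanujanH S, ramanujanF S⁆ = (-2 : MvPolynomial (Fin 3) S) • ramanujanF S := by
  rw [ramanujanH, ramanujanF, lie_vectorField, smul_vectorField]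
  congr 1
  funext i
  fin_cases i <;> simp [vectorField_apply, Fin.sum_univ_three, map_ofNat]

theorem lie_ramanujanH_ramanujanR (u : S) :
    ⁅ramanujanH S, ramanujanR u⁆ = (2 : MvPolynomial (Fin 3) S) • ramanujanR u := by
  rw [ramanujanH, ramanujanR, lie_vectorField, smul_vectorField]
  congr 1
  funext i
  fin_cases i <;> simp [vectorField_apply, Fin.sum_univ_three, map_ofNat] <;> ring

end Ramanujan

/-- `(R, F, H)` is an `sl₂`-triple: `[R,F] = H`, `[H,F] = −2F`, `[H,R] = 2R`. -/
theorem stmt14 (S : Type*) [CommRing S] (u : S) (hu : 6 * u = 1) :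
    (∀ f : MvPolynomial (Fin 3) S, Rvf u (Fvf f) - Fvf (Rvf u f) = Hvf f) ∧
    (∀ f : MvPolynomial (Fin 3) S, Hvf (Fvf f) - Fvf (Hvf f) = -2 * Fvf f) ∧
    (∀ f : MvPolynomial (Fin 3) S, Hvf (Rvf u f) - Rvf u (Hvf f) = 2 * Rvf u f) := by
  simp only [← coe_ramanujanR, ← coe_ramanujanF, ← coe_ramanujanH, ← Derivation.commutator_apply]
  refine ⟨fun f => ?_, fun f => ?_, fun f => ?_⟩
  · rw [lie_ramanujanR_ramanujanF hu]
  · rw [lie_ramanujanH_ramanujanF, Derivation.smul_apply, smul_eq_mul]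
  · rw [lie_ramanujanH_ramanujanR, Derivation.smul_apply, smul_eq_mul]
end
end

section
/- Let k be a field of characteristic p ≥ 5 and let R^p denote the p-fold composite R ∘ ⋯ ∘ R as a k-linear endomorphism of k[x₂,x₄,x₆]. Then F commutes with R^p, i.e., F ∘ R^p = R^p ∘ F. -/
open MvPolynomial

noncomputable section

/-!
`F`, `H` and `R` satisfy the `sl₂`-type relations `[F, R] = -H` and `[H, R] = 2R`. Commuting `F`
past `R` one factor at a time then gives
`F Rⁿ = Rⁿ F - n Rⁿ⁻¹ H - n(n-1) Rⁿ⁻¹`,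
and for `n = p` both correction terms carry the factor `p`, which vanishes in characteristic `p`.
-/

theorem mul_pow_succ_of_commutators {A : Type*} [Ring A] {F R H : A}
    (hFR : F * R = R * F - H) (hHR : H * R = R * H + 2 • R) (n : ℕ) :
    F * R ^ (n + 1) = R ^ (n + 1) * F - (n + 1) • (R ^ n * H) - ((n + 1) * n) • R ^ n := by
  induction n with
  | zero => simpa using hFR
  | succ n ih =>
      rw [pow_succ R (n + 1), ← mul_assoc, ih, sub_mul, sub_mul, smul_mul_assoc, smul_mul_assoc,
        mul_assoc, hFR, mul_assoc (R ^ n), hHR]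
      simp only [mul_sub, mul_add, ← mul_assoc, ← pow_succ, smul_add, mul_smul_comm, smul_smul]
      module

theorem commute_pow_of_commutators {A : Type*} [Ring A] {F R H : A}
    (hFR : F * R = R * F - H) (hHR : H * R = R * H + 2 • R) {p : ℕ} (hp : (p : A) = 0) :
    Commute F (R ^ p) := by
  cases p with
  | zero => simp
  | succ n =>
      rw [commute_iff_eq, mul_pow_succ_of_commutators hFR hHR n, mul_smul, nsmul_eq_mul, nsmul_eq_mul, hp]
      simp

theorem pderiv_pderiv_comm {σ R : Type*} [CommSemiring R] (i j : σ) (f : MvPolynomial σ R) :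
    pderiv i (pderiv j f) = pderiv j (pderiv i f) := by
  classical
  induction f using MvPolynomial.induction_on with
  | C a => simp
  | add f g hf hg => simp [hf, hg]
  | mul_X f m ih =>
      simp only [pderiv_mul, pderiv_X, Pi.single_apply, map_add, ih,
        apply_ite (pderiv i), apply_ite (pderiv j), map_zero,
        mul_ite, mul_one, mul_zero]
      split_ifs <;> simp_all [add_comm]

section Ramanujan

variable {S : Type*} [CommRing S]

theorem Fvf_Rvf (u : S) (hu : 6 * u = 1) (f : MvPolynomial (Fin 3) S) :
    Fvf (Rvf u f) = Rvf u (Fvf f) - Hvf f := by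
  have hC : (6 : MvPolynomial (Fin 3) S) * C u = 1 := by
    rw [← map_ofNat (C : S →+* _) 6, ← map_mul, hu, map_one]
  have h12 : (-12 : MvPolynomial (Fin 3) S) = C (-12) := by
    rw [map_neg, map_ofNat]
  simp only [Fvf, Rvf, Hvf, h12, pderiv_mul, map_add, map_sub, pderiv_X, pderiv_C, pderiv_pow,
    pderiv_pderiv_comm 1 0 f, pderiv_pderiv_comm 2 0 f]
  simp only [map_mul, map_neg, map_ofNat, Pi.single_apply, Fin.reduceEq, if_true, if_false]
  linear_combination ((-12 * C u - 2) * X 0 * pderiv 0 f - 4 * X 1 * pderiv 1 f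
    - 6 * X 2 * pderiv 2 f) * hC

theorem Hvf_Rvf (u : S) (f : MvPolynomial (Fin 3) S) :
    Hvf (Rvf u f) = Rvf u (Hvf f) + 2 • Rvf u f := by
  simp only [Rvf, Hvf, pderiv_mul, map_add, map_sub, pderiv_X, pderiv_C, pderiv_pow,
    pderiv_pderiv_comm 1 0 f, pderiv_pderiv_comm 2 0 f, pderiv_pderiv_comm 2 1 f]
  simp only [map_mul, map_ofNat, Pi.single_apply, Fin.reduceEq, if_true, if_false]
  ring

def RvfLin (u : S) : Module.End S (MvPolynomial (Fin 3) S) :=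
  LinearMap.mulLeft S (C (3 * u * u) * (X 0 ^ 2 - X 1)) ∘ₗ (pderiv 0).toLinearMap
    + LinearMap.mulLeft S (C (2 * u) * (X 0 * X 1 - X 2)) ∘ₗ (pderiv 1).toLinearMap
    + LinearMap.mulLeft S (C (3 * u) * (X 0 * X 2 - X 1 ^ 2)) ∘ₗ (pderiv 2).toLinearMap

def FvfLin : Module.End S (MvPolynomial (Fin 3) S) :=
  LinearMap.mulLeft S (-12 : MvPolynomial (Fin 3) S) ∘ₗ (pderiv 0).toLinearMap

def HvfLin : Module.End S (MvPolynomial (Fin 3) S) :=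
  LinearMap.mulLeft S (C 2 * X 0) ∘ₗ (pderiv 0).toLinearMap
    + LinearMap.mulLeft S (C 4 * X 1) ∘ₗ (pderiv 1).toLinearMap
    + LinearMap.mulLeft S (C 6 * X 2) ∘ₗ (pderiv 2).toLinearMap

theorem coe_RvfLin (u : S) : ⇑(RvfLin u) = Rvf u := rfl

theorem coe_FvfLin : ⇑(FvfLin : Module.End S _) = Fvf := rfl

theorem FvfLin_mul_RvfLin (u : S) (hu : 6 * u = 1) :
    FvfLin * RvfLin u = RvfLin u * FvfLin - HvfLin :=
  LinearMap.ext (Fvf_Rvf u hu)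

theorem HvfLin_mul_RvfLin (u : S) : HvfLin * RvfLin u = RvfLin u * HvfLin + 2 • RvfLin u :=
  LinearMap.ext (Hvf_Rvf u)

end Ramanujan

theorem six_ne_zero_of_charP {R : Type*} [AddMonoidWithOne R] {p : ℕ} [CharP R p]
    (hp : p.Prime) (hp5 : 5 ≤ p) : (6 : R) ≠ 0 := by
  intro h6
  have hdvd : p ∣ 6 := (CharP.cast_eq_zero_iff R p 6).mp (by exact_mod_cast h6)
  have := Nat.le_of_dvd (by norm_num) hdvd
  interval_cases p
  · omega
  · norm_num at hp

/-- `F` commutes with `R^p` in characteristic `p ≥ 5`. -/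
theorem stmt15 (p : ℕ) [Fact p.Prime] (hp5 : 5 ≤ p)
    (k : Type*) [Field k] [CharP k p] :
    ∀ f : MvPolynomial (Fin 3) k,
      Fvf ((Rvf ((6 : k)⁻¹))^[p] f) = (Rvf ((6 : k)⁻¹))^[p] (Fvf f) := by
  intro f
  have hu : (6 : k) * (6 : k)⁻¹ = 1 := mul_inv_cancel₀ (six_ne_zero_of_charP Fact.out hp5)
  have hp : (p : Module.End k (MvPolynomial (Fin 3) k)) = 0 := by
    rw [← map_natCast (algebraMap k _), CharP.cast_eq_zero, map_zero]
  have hcomm := commute_pow_of_commutators (FvfLin_mul_RvfLin _ hu) (HvfLin_mul_RvfLin _) hp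
  simpa only [Module.End.mul_apply, Module.End.pow_apply, coe_RvfLin, coe_FvfLin] using
    LinearMap.congr_fun hcomm.eq f
end
end
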